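/- arXiv:0906.0640 — 4 statements merged into one kernel-verified Lean document; each statement's English description precedes it below -/
import Mathlib

section
/- Let q ∈ ℂ with q ≠ 0 and q ≠ 1, let x ∈ ℂ with x ≠ 0, let a, W, V, U ∈ ℂ, and let p, p₋, φ, φ₋ : ℂ → ℂ be functions satisfying a·(φ(x)·p₋(x) − φ₋(x)·p(x)) = 1. Define Θ = W·(p(x)·D_{q,x}φ(x) − φ(x)·D_{q,x}p(x)) − 2V·φ(x)·p(qx) − U·p(x)·p(qx) and Ω = a·W·(p₋(x)·D_{q,x}φ(x) − φ₋(x)·D_{q,x}p(x)) − V·(2a·φ₋(x)·p(qx) + 1) − U·a·p₋(x)·p(qx). Then (W − 2x(1−q)V)·D_{q,x}p(x) = (Ω − V)·p(x) − a·Θ·p₋(x). -/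
/-- The `q`-derivative in the variable `x`: `D_{q,x} f(x) = (f(x) − f(qx))/(x(1−q))`. -/
noncomputable def Dq (q : ℂ) (f : ℂ → ℂ) (x : ℂ) : ℂ :=
  (f x - f (q * x)) / (x * (1 - q))

/-- The `q`-difference equation in `x` satisfied by `q`-semi-classical orthogonal
polynomials: `(W − 2x(1−q)V) D_{q,x} pₙ = (Ωₙ − V) pₙ − aₙ Θₙ pₙ₋₁`, where
`pm = pₙ₋₁`, `φ = φₙ₋₁`, `φm = φₙ₋₂` and `a = aₙ`. -/
theorem q_difference_x_polynomials (q : ℂ) (hq0 : q ≠ 0) (hq1 : q ≠ 1)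
    (x : ℂ) (hx : x ≠ 0) (a W V U : ℂ) (p pm φ φm : ℂ → ℂ)
    (hnorm : a * (φ x * pm x - φm x * p x) = 1) :
    (W - 2 * x * (1 - q) * V) * Dq q p x
      = ((a * W * (pm x * Dq q φ x - φm x * Dq q p x)
            - V * (2 * a * φm x * p (q * x) + 1) - U * a * pm x * p (q * x)) - V) * p x
        - a * (W * (p x * Dq q φ x - φ x * Dq q p x) - 2 * V * φ x * p (q * x)
            - U * p x * p (q * x)) * pm x := by
  have h1 : (1:ℂ) - q ≠ 0 := sub_ne_zero.2 (Ne.symm hq1)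
  unfold Dq
  field_simp
  rw [mul_comm x q]
  linear_combination (-(W*(p x - p (q*x)) + 2*x*(1-q)*V*p (q*x))) * hnorm
end

section
/- Let q ∈ ℂ with q ≠ 0 and q ≠ 1, let x ∈ ℂ with x ≠ 0, let a, W, V, U ∈ ℂ, and let f, p, p₋, φ, φ₋, ε, ε₋ : ℂ → ℂ be functions satisfying: (i) a·(φ(x)·p₋(x) − φ₋(x)·p(x)) = 1; (ii) f(x)·p(x) = φ(x) + ε(x) and f(qx)·p(qx) = φ(qx) + ε(qx); (iii) f(x)·p₋(x) = φ₋(x) + ε₋(x); (iv) W·D_{q,x}f(x) = 2V·f(x) + U. Define Θ = W·(p(x)·D_{q,x}φ(x) − φ(x)·D_{q,x}p(x)) − 2V·φ(x)·p(qx) − U·p(x)·p(qx) and Ω = a·W·(p₋(x)·D_{q,x}φ(x) − φ₋(x)·D_{q,x}p(x)) − V·(2a·φ₋(x)·p(qx) + 1) − U·a·p₋(x)·p(qx). Then W·D_{q,x}ε(x) = (Ω + V)·ε(x) − a·Θ·ε₋(x). -/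
/-- The `q`-difference equation in `x` satisfied by the associated functions:
`W D_{q,x} εₙ = (Ωₙ + V) εₙ − aₙ Θₙ εₙ₋₁`, where `pm = pₙ₋₁`, `φ = φₙ₋₁`, `φm = φₙ₋₂`,
`ε = εₙ`, `εm = εₙ₋₁` and `a = aₙ`. -/
theorem q_difference_x_associated_functions (q : ℂ) (hq0 : q ≠ 0) (hq1 : q ≠ 1)
    (x : ℂ) (hx : x ≠ 0) (a W V U : ℂ) (f p pm φ φm ε εm : ℂ → ℂ)
    (hnorm : a * (φ x * pm x - φm x * p x) = 1)
    (hfp : f x * p x = φ x + ε x)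
    (hfpq : f (q * x) * p (q * x) = φ (q * x) + ε (q * x))
    (hfpm : f x * pm x = φm x + εm x)
    (hf : W * Dq q f x = 2 * V * f x + U) :
    W * Dq q ε x
      = ((a * W * (pm x * Dq q φ x - φm x * Dq q p x)
            - V * (2 * a * φm x * p (q * x) + 1) - U * a * pm x * p (q * x)) + V) * ε x
        - a * (W * (p x * Dq q φ x - φ x * Dq q p x) - 2 * V * φ x * p (q * x)
            - U * p x * p (q * x)) * εm x := by
  have hd : x * (1 - q) ≠ 0 := mul_ne_zero hx (sub_ne_zero.mpr (Ne.symm hq1))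
  simp only [Dq] at hf ⊢
  have hf' : W * (f x - f (q * x)) = (2 * V * f x + U) * (x * (1 - q)) := by
    field_simp at hf; linear_combination hf
  field_simp
  linear_combination
    (W * (φ x - φ (q * x)) + W * f x * (p (q * x) - p x)
      - x * (1 - q) * p (q * x) * (2 * V * f x + U)) * hnorm
    + ((a * W * (pm x * (φ x - φ (q * x)) - φm x * (p x - p (q * x)))
        - x * (1 - q) * V * (2 * a * φm x * p (q * x) + 1)
        - x * (1 - q) * U * a * pm x * p (q * x)) + x * (1 - q) * V - W) * hfp
    + W * hfpq
    + (-(a * (W * (φ x * p (q * x) - p x * φ (q * x))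
        - x * (1 - q) * p (q * x) * (2 * V * φ x + U * p x)))) * hfpm
    + p (q * x) * hf'
end

section
/- Let q ∈ ℂ with q ≠ 0 and q ≠ 1, let (x,t) ∈ ℂ² with x ≠ 0 and t ≠ 0, and let w, W, V, R, S : ℂ × ℂ → ℂ be functions such that: W·D_{q,x}w = 2V·w holds at (x,t) and at (x,qt); R·D_{q,t}w = 2S·w holds at (x,t) and at (qx,t); w(x,t) ≠ 0; and W(x,t), W(x,qt), R(x,t), R(qx,t) are all nonzero. Then (2V(x,qt)/W(x,qt))·(2S(x,t)/R(x,t)) − (2S(qx,t)/R(qx,t))·(2V(x,t)/W(x,t)) = D_{q,x}(2S/R)(x,t) − D_{q,t}(2V/W)(x,t), where D_{q,x} and D_{q,t} act on the functions (x,t) ↦ 2S(x,t)/R(x,t) and (x,t) ↦ 2V(x,t)/W(x,t) respectively. -/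
/-- The `q`-derivative in the spectral variable `x`:
`D_{q,x} f(x,t) = (f(x,t) − f(qx,t))/(x(1−q))`. -/
noncomputable def Dqx (q : ℂ) (f : ℂ → ℂ → ℂ) (x t : ℂ) : ℂ :=
  (f x t - f (q * x) t) / (x * (1 - q))

/-- The `q`-derivative in the deformation variable `t`:
`D_{q,t} f(x,t) = (f(x,t) − f(x,qt))/(t(1−q))`. -/
noncomputable def Dqt (q : ℂ) (f : ℂ → ℂ → ℂ) (x t : ℂ) : ℂ :=
  (f x t - f x (q * t)) / (t * (1 - q))

/-- Atomic version of the compatibility identity: given the four cleared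
`q`-difference relations among the values `w0 = w(x,t)`, `w1 = w(qx,t)`,
`w2 = w(x,qt)`, `w3 = w(qx,qt)` and the coefficient values, the
cross-derivative compatibility holds. -/
lemma weight_compat_aux (q x t w0 w1 w2 w3 W0 W1 V0 V1 R0 R1 S0 S1 : ℂ)
    (hx : x ≠ 0) (ht : t ≠ 0) (hl : (1:ℂ) - q ≠ 0) (hw : w0 ≠ 0)
    (hW0 : W0 ≠ 0) (hW1 : W1 ≠ 0) (hR0 : R0 ≠ 0) (hR1 : R1 ≠ 0)
    (h1 : W0 * ((w0 - w1) / (x * (1 - q))) = 2 * V0 * w0)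
    (h2 : W1 * ((w2 - w3) / (x * (1 - q))) = 2 * V1 * w2)
    (h3 : R0 * ((w0 - w2) / (t * (1 - q))) = 2 * S0 * w0)
    (h4 : R1 * ((w1 - w3) / (t * (1 - q))) = 2 * S1 * w1) :
    (2 * V1 / W1) * (2 * S0 / R0) - (2 * S1 / R1) * (2 * V0 / W0)
      = (2 * S0 / R0 - 2 * S1 / R1) / (x * (1 - q))
        - (2 * V0 / W0 - 2 * V1 / W1) / (t * (1 - q)) := by
  have hxl : x * (1 - q) ≠ 0 := mul_ne_zero hx hl
  have htl : t * (1 - q) ≠ 0 := mul_ne_zero ht hl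
  have d1 : W0 * (w0 - w1) - 2 * V0 * w0 * (x * (1 - q)) = 0 := by
    field_simp at h1; linear_combination h1
  have d2 : W1 * (w2 - w3) - 2 * V1 * w2 * (x * (1 - q)) = 0 := by
    field_simp at h2; linear_combination h2
  have d3 : R0 * (w0 - w2) - 2 * S0 * w0 * (t * (1 - q)) = 0 := by
    field_simp at h3; linear_combination h3
  have d4 : R1 * (w1 - w3) - 2 * S1 * w1 * (t * (1 - q)) = 0 := by
    field_simp at h4; linear_combination h4
  have P : (R0 - 2 * S0 * (t * (1 - q))) * (W1 - 2 * V1 * (x * (1 - q))) * W0 * R1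
      = (W0 - 2 * V0 * (x * (1 - q))) * (R1 - 2 * S1 * (t * (1 - q))) * R0 * W1 := by
    refine mul_left_cancel₀ hw ?_
    linear_combination (R0 * W0 * R1) * d2 - (R0 * W0 * W1) * d4
      + (W0 * R1 * (W1 - 2 * V1 * (x * (1 - q)))) * d3
      - (R0 * W1 * (R1 - 2 * S1 * (t * (1 - q)))) * d1
  field_simp
  refine mul_left_cancel₀ (mul_ne_zero (two_ne_zero : (2:ℂ) ≠ 0) hl) ?_
  linear_combination P

/-- Compatibility of the spectral and deformation data of a `q`-semi-classical
deformed weight `w` with `W D_{q,x} w = 2V w` and `R D_{q,t} w = 2S w`: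
`(2V̂/Ŵ)(2S/R) − (2S̄/R̄)(2V/W) = D_{q,x}(2S/R) − D_{q,t}(2V/W)`. -/
theorem weight_compatibility_WVRS (q : ℂ) (hq0 : q ≠ 0) (hq1 : q ≠ 1)
    (x t : ℂ) (hx : x ≠ 0) (ht : t ≠ 0) (w W V R S : ℂ → ℂ → ℂ)
    (hWx : W x t * Dqx q w x t = 2 * V x t * w x t)
    (hWxqt : W x (q * t) * Dqx q w x (q * t) = 2 * V x (q * t) * w x (q * t))
    (hRt : R x t * Dqt q w x t = 2 * S x t * w x t)
    (hRqxt : R (q * x) t * Dqt q w (q * x) t = 2 * S (q * x) t * w (q * x) t)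
    (hw : w x t ≠ 0)
    (hW : W x t ≠ 0) (hWq : W x (q * t) ≠ 0)
    (hR : R x t ≠ 0) (hRq : R (q * x) t ≠ 0) :
    (2 * V x (q * t) / W x (q * t)) * (2 * S x t / R x t)
        - (2 * S (q * x) t / R (q * x) t) * (2 * V x t / W x t)
      = Dqx q (fun x t => 2 * S x t / R x t) x t
        - Dqt q (fun x t => 2 * V x t / W x t) x t := by
  have hl : (1 : ℂ) - q ≠ 0 := sub_ne_zero.mpr (Ne.symm hq1)
  simp only [Dqx, Dqt] at hWx hWxqt hRt hRqxt ⊢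
  exact weight_compat_aux q x t (w x t) (w (q * x) t) (w x (q * t)) (w (q * x) (q * t))
    (W x t) (W x (q * t)) (V x t) (V x (q * t)) (R x t) (R (q * x) t)
    (S x t) (S (q * x) t) hx ht hl hw hW hWq hR hRq hWx hWxqt hRt hRqxt
end

section
/- Let q ∈ ℂ with q ≠ 0 and q ≠ 1, let (x,t) ∈ ℂ² with x ≠ 0 and t ≠ 0, and let f, W, V, U, R, S, T : ℂ × ℂ → ℂ be functions such that: W·D_{q,x}f = 2V·f + U holds at (x,t) and at (x,qt); R·D_{q,t}f = 2S·f + T holds at (x,t) and at (qx,t); W(x,t), W(x,qt), R(x,t), R(qx,t) are all nonzero; and the compatibility (2V(x,qt)/W(x,qt))·(2S(x,t)/R(x,t)) − (2S(qx,t)/R(qx,t))·(2V(x,t)/W(x,t)) = D_{q,x}(2S/R)(x,t) − D_{q,t}(2V/W)(x,t) holds. Then (2V(x,qt)/W(x,qt))·(T(x,t)/R(x,t)) − (2S(qx,t)/R(qx,t))·(U(x,t)/W(x,t)) = D_{q,x}(T/R)(x,t) − D_{q,t}(U/W)(x,t). -/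
/-- Compatibility constraint relating `U` and `T` for the Stieltjes function `f` of a
deformed `q`-semi-classical weight, with `W D_{q,x} f = 2V f + U` and
`R D_{q,t} f = 2S f + T`:
`(2V̂/Ŵ)(T/R) − (2S̄/R̄)(U/W) = D_{q,x}(T/R) − D_{q,t}(U/W)`. -/
theorem stieltjes_compatibility_UT (q : ℂ) (hq0 : q ≠ 0) (hq1 : q ≠ 1)
    (x t : ℂ) (hx : x ≠ 0) (ht : t ≠ 0) (f W V U R S T : ℂ → ℂ → ℂ)
    (hWx : W x t * Dqx q f x t = 2 * V x t * f x t + U x t)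
    (hWxqt : W x (q * t) * Dqx q f x (q * t)
      = 2 * V x (q * t) * f x (q * t) + U x (q * t))
    (hRt : R x t * Dqt q f x t = 2 * S x t * f x t + T x t)
    (hRqxt : R (q * x) t * Dqt q f (q * x) t
      = 2 * S (q * x) t * f (q * x) t + T (q * x) t)
    (hW : W x t ≠ 0) (hWq : W x (q * t) ≠ 0)
    (hR : R x t ≠ 0) (hRq : R (q * x) t ≠ 0)
    (hcomp : (2 * V x (q * t) / W x (q * t)) * (2 * S x t / R x t)
        - (2 * S (q * x) t / R (q * x) t) * (2 * V x t / W x t)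
      = Dqx q (fun x t => 2 * S x t / R x t) x t
        - Dqt q (fun x t => 2 * V x t / W x t) x t) :
    (2 * V x (q * t) / W x (q * t)) * (T x t / R x t)
        - (2 * S (q * x) t / R (q * x) t) * (U x t / W x t)
      = Dqx q (fun x t => T x t / R x t) x t
        - Dqt q (fun x t => U x t / W x t) x t := by
  have hq1' : (1:ℂ) - q ≠ 0 := sub_ne_zero_of_ne (Ne.symm hq1)
  have e1 : U x t / W x t = Dqx q f x t - 2 * V x t * f x t / W x t := by
    rw [eq_sub_iff_add_eq, ← add_div, div_eq_iff hW]; linear_combination -hWx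
  have e2 : U x (q * t) / W x (q * t) = Dqx q f x (q * t) - 2 * V x (q * t) * f x (q * t) / W x (q * t) := by
    rw [eq_sub_iff_add_eq, ← add_div, div_eq_iff hWq]; linear_combination -hWxqt
  have e3 : T x t / R x t = Dqt q f x t - 2 * S x t * f x t / R x t := by
    rw [eq_sub_iff_add_eq, ← add_div, div_eq_iff hR]; linear_combination -hRt
  have e4 : T (q * x) t / R (q * x) t = Dqt q f (q * x) t - 2 * S (q * x) t * f (q * x) t / R (q * x) t := by
    rw [eq_sub_iff_add_eq, ← add_div, div_eq_iff hRq]; linear_combination -hRqxt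
  simp only [Dqx, Dqt] at *
  rw [e1, e2, e3, e4]
  linear_combination (-f x t) * hcomp
end
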